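/- arXiv:2304.02605 — 4 statements merged into one kernel-verified Lean document; each statement's English description precedes it below -/
import Mathlib

section
/- For any real constants A and α > 1, the derivative with respect to t > 0 of the function t ↦ E_{α,1}(A t^α) equals A · t^{α-1} · E_{α,α}(A t^α). -/
/-- The two-parameter Mittag-Leffler function `E_{α,r}(z) = ∑ z^m / Γ(mα + r)`. -/
noncomputable def mittagLeffler (α r z : ℝ) : ℝ :=
  ∑' m : ℕ, z ^ m / Real.Gamma (m * α + r)

lemma gamma_lb_fact {α : ℝ} (hα : 1 < α) (m : ℕ) :
    (m.factorial : ℝ) ≤ Real.Gamma (m * α + 1) := by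
  rcases Nat.eq_zero_or_pos m with hm | hm
  · simp [hm, Real.Gamma_one]
  · have hm1 : (1 : ℝ) ≤ m := by exact_mod_cast hm
    have h1 : (m : ℝ) + 1 ≤ m * α + 1 := by nlinarith
    have mem1 : (m : ℝ) + 1 ∈ Set.Ici (2 : ℝ) := by simp [Set.mem_Ici]; linarith
    have mem2 : (m : ℝ) * α + 1 ∈ Set.Ici (2 : ℝ) := by
      simp only [Set.mem_Ici] at mem1 ⊢; linarith
    have := Real.Gamma_strictMonoOn_Ici.monotoneOn mem1 mem2 h1
    rwa [Real.Gamma_nat_eq_factorial] at this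

theorem deriv_mittagLeffler_one (A α t : ℝ) (hα : 1 < α) (ht : 0 < t) :
    HasDerivAt (fun s : ℝ => mittagLeffler α 1 (A * s ^ α))
      (A * t ^ (α - 1) * mittagLeffler α α (A * t ^ α)) t := by
  set T : ℝ := t + 1 with hTdef
  have hT : 0 < T := by positivity
  have htT : t < T := by simp [hTdef]
  set x : ℝ := |A| * T ^ α with hxdef
  have hx0 : 0 ≤ x := by positivity
  set g : ℕ → ℝ → ℝ := fun m s => (A * s ^ α) ^ m / Real.Gamma (m * α + 1) with hgdef
  set g' : ℕ → ℝ → ℝ := fun m s =>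
    (↑m * (A * s ^ α) ^ (m - 1) * (A * (α * s ^ (α - 1)))) / Real.Gamma (m * α + 1) with hg'def
  set u : ℕ → ℝ := fun m => (m : ℝ) * x ^ m * α / (T * Real.Gamma (m * α + 1)) with hudef
  have hΓpos : ∀ m : ℕ, 0 < Real.Gamma ((m : ℝ) * α + 1) := fun m =>
    Real.Gamma_pos_of_pos (by positivity)
  -- summability of u
  have hu : Summable u := by
    have hsum2 : Summable (fun m : ℕ => (α / T) * ((2 * x) ^ m / m.factorial)) :=
      (Real.summable_pow_div_factorial (2 * x)).mul_left _
    refine Summable.of_nonneg_of_le (fun m => ?_) (fun m => ?_) hsum2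
    · have := hΓpos m
      positivity
    · have hfact : (m.factorial : ℝ) ≤ Real.Gamma (m * α + 1) := gamma_lb_fact hα m
      have hfp : (0 : ℝ) < m.factorial := by exact_mod_cast m.factorial_pos
      have hm2 : (m : ℝ) ≤ 2 ^ m := by exact_mod_cast (Nat.lt_two_pow_self (n := m)).le
      have key : (m : ℝ) * x ^ m * α / (T * Real.Gamma (m * α + 1)) ≤
          (2 ^ m * x ^ m * α) / (T * m.factorial) := by
        gcongr
      refine key.trans (le_of_eq ?_)
      rw [mul_pow]
      field_simp
      ring
  -- derivative of each term on Ioo 0 T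
  have hg : ∀ m : ℕ, ∀ s : ℝ, s ∈ Set.Ioo (0 : ℝ) T → HasDerivAt (g m) (g' m s) s := by
    intro m s hs
    have h1 : HasDerivAt (fun y : ℝ => A * y ^ α) (A * (α * s ^ (α - 1))) s :=
      (Real.hasDerivAt_rpow_const (Or.inl hs.1.ne')).const_mul A
    exact (h1.pow m).div_const _
  -- bound on derivative
  have hg' : ∀ m : ℕ, ∀ s : ℝ, s ∈ Set.Ioo (0 : ℝ) T → ‖g' m s‖ ≤ u m := by
    intro m s hs
    rcases Nat.eq_zero_or_pos m with hm | hm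
    · simp [hg'def, hudef, hm]
    · have hs0 : 0 < s := hs.1
      have hsT : s ≤ T := hs.2.le
      have hm1 : (1 : ℝ) ≤ m := by exact_mod_cast hm
      have hcast : ((m - 1 : ℕ) : ℝ) = (m : ℝ) - 1 := by
        have := Nat.cast_sub (R := ℝ) hm
        simpa using this
      -- |numerator| = m * α * |A|^m * s^(m*α - 1)
      have hexp : (0:ℝ) ≤ (m : ℝ) * α - 1 := by nlinarith
      have hA : |A| ^ (m - 1) * |A| = |A| ^ m := by
        rw [← pow_succ, Nat.sub_add_cancel hm]
      have hspow : s ^ (α * ((m : ℝ) - 1)) * s ^ (α - 1) = s ^ ((m : ℝ) * α - 1) := by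
        rw [← Real.rpow_add hs0]; ring_nf
      have habs : |(↑m * (A * s ^ α) ^ (m - 1) * (A * (α * s ^ (α - 1))))| =
          (m : ℝ) * α * |A| ^ m * s ^ ((m : ℝ) * α - 1) := by
        have e1 : |(↑m * (A * s ^ α) ^ (m - 1) * (A * (α * s ^ (α - 1))))| =
            (m : ℝ) * (|A| * s ^ α) ^ (m - 1) * (|A| * (α * s ^ (α - 1))) := by
          simp [abs_mul, abs_pow, abs_of_nonneg (Real.rpow_nonneg hs0.le α),
            abs_of_nonneg (Real.rpow_nonneg hs0.le (α - 1)),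
            abs_of_nonneg (by linarith : (0:ℝ) ≤ α), Nat.abs_cast, mul_assoc]
        rw [e1, mul_pow, ← Real.rpow_natCast (s ^ α) (m - 1), ← Real.rpow_mul hs0.le, hcast]
        calc (m : ℝ) * (|A| ^ (m-1) * s ^ (α * ((m:ℝ) - 1))) * (|A| * (α * s ^ (α - 1)))
            = (m : ℝ) * α * (|A| ^ (m-1) * |A|) * (s ^ (α * ((m:ℝ) - 1)) * s ^ (α - 1)) := by
              ring
          _ = (m : ℝ) * α * |A| ^ m * s ^ ((m : ℝ) * α - 1) := by rw [hA, hspow]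
      have hsle : s ^ ((m : ℝ) * α - 1) ≤ T ^ ((m : ℝ) * α - 1) :=
        Real.rpow_le_rpow hs0.le hsT hexp
      have hTpow : T ^ ((m : ℝ) * α - 1) = T ^ ((m:ℝ) * α) / T := by
        rw [Real.rpow_sub hT, Real.rpow_one]
      have hux : u m = (m : ℝ) * α * |A| ^ m * (T ^ ((m:ℝ) * α) / T) /
          Real.Gamma (m * α + 1) := by
        show (m : ℝ) * (|A| * T ^ α) ^ m * α / (T * Real.Gamma (m * α + 1)) = _
        rw [mul_pow, ← Real.rpow_natCast (T ^ α) m, ← Real.rpow_mul hT.le,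
          mul_comm α (m : ℝ)]
        field_simp
      rw [hg'def]
      simp only [Real.norm_eq_abs, abs_div, abs_of_pos (hΓpos m), habs, hux]
      gcongr
      exact hsle.trans hTpow.le
  -- summability at t
  have hmemt : t ∈ Set.Ioo (0:ℝ) T := ⟨ht, htT⟩
  have hsum_t : Summable (fun m => g m t) := by
    refine Summable.of_norm_bounded (Real.summable_pow_div_factorial x) (fun m => ?_)
    have hfact : (m.factorial : ℝ) ≤ Real.Gamma (m * α + 1) := gamma_lb_fact hα m
    have hfp : (0 : ℝ) < m.factorial := by exact_mod_cast m.factorial_pos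
    have hAt : |A * t ^ α| ≤ x := by
      rw [abs_mul, abs_of_nonneg (Real.rpow_nonneg ht.le α), hxdef]
      gcongr
    rw [hgdef]
    simp only [Real.norm_eq_abs, abs_div, abs_pow, abs_of_pos (hΓpos m)]
    gcongr
    
  have key := hasDerivAt_tsum_of_isPreconnected hu isOpen_Ioo isPreconnected_Ioo
    hg hg' hmemt hsum_t hmemt
  have hfun : (fun z : ℝ => ∑' n, g n z) = fun s : ℝ => mittagLeffler α 1 (A * s ^ α) := by
    funext s; rw [mittagLeffler]
  rw [hfun] at key
  convert key using 1
  case e'_4 => rfl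
  case e'_5 => rfl
  -- value identity
  have hsum' : Summable (fun m => g' m t) :=
    Summable.of_norm_bounded hu (fun m => hg' m t hmemt)
  rw [Summable.tsum_eq_zero_add hsum']
  have h0 : g' 0 t = 0 := by simp [hg'def]
  rw [h0, zero_add, mittagLeffler, ← tsum_mul_left]
  refine tsum_congr fun k => ?_
  have hk : ((k : ℝ) + 1) * α ≠ 0 := by
    have : (0:ℝ) < ((k : ℝ) + 1) * α := by positivity
    exact this.ne'
  have hΓkpos : 0 < Real.Gamma ((k:ℝ) * α + α) := Real.Gamma_pos_of_pos (by positivity)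
  show A * t ^ (α - 1) * ((A * t ^ α) ^ k / Real.Gamma ((k:ℝ) * α + α)) = g' (k + 1) t
  rw [hg'def]
  simp only [Nat.add_sub_cancel, Nat.cast_add, Nat.cast_one]
  rw [show ((k : ℝ) + 1) * α + 1 = (((k:ℝ) + 1) * α) + 1 from rfl,
    Real.Gamma_add_one hk,
    show ((k : ℝ) + 1) * α = (k:ℝ) * α + α by ring]
  field_simp
end

section
/- Let H[u] = ∑_{r=1}^2 ∂/∂x_r((τ_{r1}u + τ_{r0}) ∂u/∂x_r) + τ₃₀ ∂²u/∂x₃² + ∑_{r=1}^2 ρ_{r0} ∂u/∂x_r. Then the 5-dimensional space W = Span{1, x₁, x₂, sin(√a₃₁ x₃), cos(√a₃₁ x₃)} (a₃₁ > 0) is invariant under H: for u = λ₁ + λ₂x₁ + λ₃x₂ + λ₄ sin(√a₃₁ x₃) + λ₅ cos(√a₃₁ x₃), H[u] = (τ₁₁λ₂² + ρ₁₀λ₂ + τ₂₁λ₃² + ρ₂₀λ₃) − τ₃₀ a₃₁ λ₄ sin(√a₃₁ x₃) − τ₃₀ a₃₁ λ₅ cos(√a₃₁ x₃) ∈ W.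 -/
/-- The quasilinear operator
`H[u] = ∑_{r=1,2} ∂/∂x_r((τ_{r1}u + τ_{r0})∂u/∂x_r) + τ₃₀ ∂²u/∂x₃²
        + ρ₁₀ ∂u/∂x₁ + ρ₂₀ ∂u/∂x₂`. -/
noncomputable def Hop3 (τ11 τ10 τ21 τ20 τ30 ρ10 ρ20 : ℝ)
    (u : ℝ → ℝ → ℝ → ℝ) (x1 x2 x3 : ℝ) : ℝ :=
  deriv (fun y => (τ11 * u y x2 x3 + τ10) * deriv (fun z => u z x2 x3) y) x1
  + deriv (fun y => (τ21 * u x1 y x3 + τ20) * deriv (fun z => u x1 z x3) y) x2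
  + τ30 * deriv (deriv (fun y => u x1 x2 y)) x3
  + ρ10 * deriv (fun y => u y x2 x3) x1
  + ρ20 * deriv (fun y => u x1 y x3) x2

/-! Along `x₁` and `x₂` the function `u` is affine, so each flux `(τ u + c) ∂u` is affine with
slope `τ b²`; along `x₃` it is a harmonic of frequency `√a₃₁`, which `∂²` multiplies by `-a₃₁`. -/

open Real

theorem deriv_mul_deriv_of_hasDerivAt_const {φ : ℝ → ℝ} {b : ℝ}
    (hφ : ∀ y, HasDerivAt φ b y) (τ c x : ℝ) :
    deriv (fun y => (τ * φ y + c) * deriv φ y) x = τ * b ^ 2 := by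
  have hderiv : deriv φ = fun _ => b := funext fun y => (hφ y).deriv
  rw [hderiv, (((hφ x).const_mul τ).add_const c).mul_const b |>.deriv]
  ring

theorem hasDerivAt_add_sin_add_cos (c p q s x : ℝ) :
    HasDerivAt (fun y => c + p * sin (s * y) + q * cos (s * y))
      (s * (p * cos (s * x) - q * sin (s * x))) x :=
  have hlin : HasDerivAt (fun y => s * y) s x := hasDerivAt_const_mul s
  ((hlin.sin.const_mul p).const_add c).add (hlin.cos.const_mul q) |>.congr_deriv (by ring)

theorem deriv_deriv_add_sin_add_cos (c p q s x : ℝ) :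
    deriv (deriv fun y => c + p * sin (s * y) + q * cos (s * y)) x
      = -s ^ 2 * (p * sin (s * x) + q * cos (s * x)) := by
  have hderiv : (deriv fun y => c + p * sin (s * y) + q * cos (s * y))
      = fun y => 0 + (-(s * q)) * sin (s * y) + (s * p) * cos (s * y) := by
    funext y
    rw [(hasDerivAt_add_sin_add_cos c p q s y).deriv]
    ring
  rw [hderiv, (hasDerivAt_add_sin_add_cos _ _ _ s x).deriv]
  ring

theorem trig_poly_subspace_invariant
    (τ11 τ10 τ21 τ20 τ30 ρ10 ρ20 a31 l1 l2 l3 l4 l5 : ℝ) (ha31 : 0 < a31) :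
    ∀ x1 x2 x3 : ℝ,
      Hop3 τ11 τ10 τ21 τ20 τ30 ρ10 ρ20
        (fun y1 y2 y3 => l1 + l2 * y1 + l3 * y2
          + l4 * Real.sin (Real.sqrt a31 * y3) + l5 * Real.cos (Real.sqrt a31 * y3)) x1 x2 x3
      = (τ11 * l2 ^ 2 + ρ10 * l2 + τ21 * l3 ^ 2 + ρ20 * l3)
        - τ30 * a31 * l4 * Real.sin (Real.sqrt a31 * x3)
        - τ30 * a31 * l5 * Real.cos (Real.sqrt a31 * x3) := by
  intro x1 x2 x3
  set s := √a31
  have slice1 : ∀ y, HasDerivAt (fun z => l1 + l2 * z + l3 * x2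
      + l4 * sin (s * x3) + l5 * cos (s * x3)) l2 y := fun y =>
    (((hasDerivAt_const_mul l2).const_add l1).add_const _).add_const _ |>.add_const _
  have slice2 : ∀ y, HasDerivAt (fun z => l1 + l2 * x1 + l3 * z
      + l4 * sin (s * x3) + l5 * cos (s * x3)) l3 y := fun y =>
    ((hasDerivAt_const_mul l3).const_add (l1 + l2 * x1)).add_const _ |>.add_const _
  simp only [Hop3]
  rw [deriv_mul_deriv_of_hasDerivAt_const slice1, deriv_mul_deriv_of_hasDerivAt_const slice2,
    (slice1 x1).deriv, (slice2 x2).deriv, deriv_deriv_add_sin_add_cos, sq_sqrt ha31.le]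
  ring
end

section
/- Define u(x₁,x₂,x₃,t) = A₁ t + γ₁ + γ₂x₁ + γ₃x₂ + e^{−τ₃₀ a₃₁ t}(γ₄ sin(√a₃₁ x₃) + γ₅ cos(√a₃₁ x₃)) with A₁ = ∑_{i=1}^2 (τ_{i1}γ_{i+1}² + ρ_{i0}γ_{i+1}). Then u satisfies ∂u/∂t = ∑_{r=1}^2 ∂/∂x_r((τ_{r1}u + τ_{r0}) ∂u/∂x_r) + τ₃₀ ∂²u/∂x₃² + ∑_{r=1}^2 ρ_{r0} ∂u/∂x_r. -/
theorem trig_poly_solution_first_order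
    (τ11 τ10 τ21 τ20 τ30 ρ10 ρ20 a31 γ1 γ2 γ3 γ4 γ5 A1 : ℝ) (ha31 : 0 < a31)
    (hA1 : A1 = (τ11 * γ2 ^ 2 + ρ10 * γ2) + (τ21 * γ3 ^ 2 + ρ20 * γ3))
    (u : ℝ → ℝ → ℝ → ℝ → ℝ)
    (hu : ∀ x1 x2 x3 t, u x1 x2 x3 t
        = A1 * t + γ1 + γ2 * x1 + γ3 * x2
          + Real.exp (-(τ30 * a31) * t)
              * (γ4 * Real.sin (Real.sqrt a31 * x3) + γ5 * Real.cos (Real.sqrt a31 * x3))) :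
    ∀ x1 x2 x3 t,
      deriv (fun s => u x1 x2 x3 s) t
        = Hop3 τ11 τ10 τ21 τ20 τ30 ρ10 ρ20
            (fun y1 y2 y3 => u y1 y2 y3 t) x1 x2 x3 := by
  intro x1 x2 x3 t
  have hs2 : Real.sqrt a31 * Real.sqrt a31 = a31 := Real.mul_self_sqrt ha31.le
  set c : ℝ := -(τ30 * a31) with hc
  set s : ℝ := Real.sqrt a31 with hsdef
  set E : ℝ := Real.exp (c * t) with hE
  -- time derivative
  have ht : deriv (fun q => u x1 x2 x3 q) t
      = A1 + c * E * (γ4 * Real.sin (s * x3) + γ5 * Real.cos (s * x3)) := by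
    have he : HasDerivAt (fun q => Real.exp (c * q)) (c * Real.exp (c * t)) t := by
      simpa [Function.comp_def, mul_comm] using
        (Real.hasDerivAt_exp (c * t)).comp t ((hasDerivAt_id t).const_mul c)
    have h1 : HasDerivAt
        (fun q => A1 * q + γ1 + γ2 * x1 + γ3 * x2
          + Real.exp (c * q) * (γ4 * Real.sin (s * x3) + γ5 * Real.cos (s * x3)))
        (A1 + c * E * (γ4 * Real.sin (s * x3) + γ5 * Real.cos (s * x3))) t := by
      have := (((((hasDerivAt_id t).const_mul A1).add_const γ1).add_const (γ2 * x1)).add_const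
        (γ3 * x2)).add (he.mul_const (γ4 * Real.sin (s * x3) + γ5 * Real.cos (s * x3)))
      simpa [Pi.add_def, hE, mul_comm, mul_assoc] using this
    simp only [hu]
    exact h1.deriv
  -- derivative in x1 direction
  have hd1 : ∀ y, deriv (fun z => u z x2 x3 t) y = γ2 := by
    intro y
    have h1 : HasDerivAt
        (fun z => A1 * t + γ1 + γ2 * z + γ3 * x2
          + Real.exp (c * t) * (γ4 * Real.sin (s * x3) + γ5 * Real.cos (s * x3))) γ2 y := by
      have := ((((hasDerivAt_const y (A1 * t + γ1)).add
        ((hasDerivAt_id y).const_mul γ2)).add_const (γ3 * x2)).add_const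
        (Real.exp (c * t) * (γ4 * Real.sin (s * x3) + γ5 * Real.cos (s * x3))))
      simpa [add_assoc] using this
    simp only [hu]
    exact h1.deriv
  have hd2 : ∀ y, deriv (fun z => u x1 z x3 t) y = γ3 := by
    intro y
    have h1 : HasDerivAt
        (fun z => A1 * t + γ1 + γ2 * x1 + γ3 * z
          + Real.exp (c * t) * (γ4 * Real.sin (s * x3) + γ5 * Real.cos (s * x3))) γ3 y := by
      have := (((hasDerivAt_const y (A1 * t + γ1 + γ2 * x1)).add
        ((hasDerivAt_id y).const_mul γ3)).add_const
        (Real.exp (c * t) * (γ4 * Real.sin (s * x3) + γ5 * Real.cos (s * x3))))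
      simpa [add_assoc] using this
    simp only [hu]
    exact h1.deriv
  -- x1 derivative of u itself
  have hu1 : HasDerivAt (fun y => u y x2 x3 t) γ2 x1 := by
    have h1 : HasDerivAt
        (fun z => A1 * t + γ1 + γ2 * z + γ3 * x2
          + Real.exp (c * t) * (γ4 * Real.sin (s * x3) + γ5 * Real.cos (s * x3))) γ2 x1 := by
      have := ((((hasDerivAt_const x1 (A1 * t + γ1)).add
        ((hasDerivAt_id x1).const_mul γ2)).add_const (γ3 * x2)).add_const
        (Real.exp (c * t) * (γ4 * Real.sin (s * x3) + γ5 * Real.cos (s * x3))))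
      simpa [add_assoc] using this
    have : (fun y => u y x2 x3 t) = fun z => A1 * t + γ1 + γ2 * z + γ3 * x2
        + Real.exp (c * t) * (γ4 * Real.sin (s * x3) + γ5 * Real.cos (s * x3)) := by
      funext z; rw [hu]
    rw [this]; exact h1
  have hu2 : HasDerivAt (fun y => u x1 y x3 t) γ3 x2 := by
    have h1 : HasDerivAt
        (fun z => A1 * t + γ1 + γ2 * x1 + γ3 * z
          + Real.exp (c * t) * (γ4 * Real.sin (s * x3) + γ5 * Real.cos (s * x3))) γ3 x2 := by
      have := (((hasDerivAt_const x2 (A1 * t + γ1 + γ2 * x1)).add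
        ((hasDerivAt_id x2).const_mul γ3)).add_const
        (Real.exp (c * t) * (γ4 * Real.sin (s * x3) + γ5 * Real.cos (s * x3))))
      simpa [add_assoc] using this
    have : (fun y => u x1 y x3 t) = fun z => A1 * t + γ1 + γ2 * x1 + γ3 * z
        + Real.exp (c * t) * (γ4 * Real.sin (s * x3) + γ5 * Real.cos (s * x3)) := by
      funext z; rw [hu]
    rw [this]; exact h1
  -- first flux term
  have hterm1 : deriv (fun y => (τ11 * u y x2 x3 t + τ10)
      * deriv (fun z => u z x2 x3 t) y) x1 = τ11 * γ2 * γ2 := by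
    have heq : (fun y => (τ11 * u y x2 x3 t + τ10) * deriv (fun z => u z x2 x3 t) y)
        = fun y => (τ11 * u y x2 x3 t + τ10) * γ2 := by
      funext y; rw [hd1 y]
    rw [heq]
    have := (((hu1.const_mul τ11).add_const τ10).mul_const γ2)
    simpa [mul_comm, mul_assoc] using this.deriv
  have hterm2 : deriv (fun y => (τ21 * u x1 y x3 t + τ20)
      * deriv (fun z => u x1 z x3 t) y) x2 = τ21 * γ3 * γ3 := by
    have heq : (fun y => (τ21 * u x1 y x3 t + τ20) * deriv (fun z => u x1 z x3 t) y)
        = fun y => (τ21 * u x1 y x3 t + τ20) * γ3 := by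
      funext y; rw [hd2 y]
    rw [heq]
    have := (((hu2.const_mul τ21).add_const τ20).mul_const γ3)
    simpa [mul_comm, mul_assoc] using this.deriv
  -- derivative in x3
  have hd3 : ∀ y, deriv (fun z => u x1 x2 z t) y
      = E * (γ4 * (s * Real.cos (s * y)) - γ5 * (s * Real.sin (s * y))) := by
    intro y
    have hsin : HasDerivAt (fun z => Real.sin (s * z)) (s * Real.cos (s * y)) y := by
      simpa [Function.comp_def, mul_comm] using
        (Real.hasDerivAt_sin (s * y)).comp y ((hasDerivAt_id y).const_mul s)
    have hcos : HasDerivAt (fun z => Real.cos (s * z)) (-(s * Real.sin (s * y))) y := by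
      simpa [Function.comp_def, mul_comm] using
        (Real.hasDerivAt_cos (s * y)).comp y ((hasDerivAt_id y).const_mul s)
    have h1 : HasDerivAt
        (fun z => A1 * t + γ1 + γ2 * x1 + γ3 * x2
          + Real.exp (c * t) * (γ4 * Real.sin (s * z) + γ5 * Real.cos (s * z)))
        (E * (γ4 * (s * Real.cos (s * y)) - γ5 * (s * Real.sin (s * y)))) y := by
      have := (hasDerivAt_const y (A1 * t + γ1 + γ2 * x1 + γ3 * x2)).add
        (((hsin.const_mul γ4).add (hcos.const_mul γ5)).const_mul (Real.exp (c * t)))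
      simpa [Pi.add_def, hE, mul_sub, mul_add, sub_eq_add_neg, mul_comm, mul_assoc] using this
    simp only [hu]
    exact h1.deriv
  have hterm3 : deriv (deriv (fun z => u x1 x2 z t)) x3
      = -a31 * (E * (γ4 * Real.sin (s * x3) + γ5 * Real.cos (s * x3))) := by
    have heq : deriv (fun z => u x1 x2 z t)
        = fun y => E * (γ4 * (s * Real.cos (s * y)) - γ5 * (s * Real.sin (s * y))) := by
      funext y; exact hd3 y
    rw [heq]
    have hsin : HasDerivAt (fun z => Real.sin (s * z)) (s * Real.cos (s * x3)) x3 := by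
      simpa [Function.comp_def, mul_comm] using
        (Real.hasDerivAt_sin (s * x3)).comp x3 ((hasDerivAt_id x3).const_mul s)
    have hcos : HasDerivAt (fun z => Real.cos (s * z)) (-(s * Real.sin (s * x3))) x3 := by
      simpa [Function.comp_def, mul_comm] using
        (Real.hasDerivAt_cos (s * x3)).comp x3 ((hasDerivAt_id x3).const_mul s)
    have h1 : HasDerivAt
        (fun y => E * (γ4 * (s * Real.cos (s * y)) - γ5 * (s * Real.sin (s * y))))
        (-a31 * (E * (γ4 * Real.sin (s * x3) + γ5 * Real.cos (s * x3)))) x3 := by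
      have := (((hcos.const_mul s).const_mul γ4).sub
        ((hsin.const_mul s).const_mul γ5)).const_mul E
      have h2 : E * (γ4 * (s * -(s * Real.sin (s * x3))) - γ5 * (s * (s * Real.cos (s * x3))))
          = -a31 * (E * (γ4 * Real.sin (s * x3) + γ5 * Real.cos (s * x3))) := by
        rw [← hs2]; ring
      rw [h2] at this
      exact this
    exact h1.deriv
  rw [ht, Hop3, hterm1, hterm2, hterm3]
  rw [hd1 x1, hd2 x2, hA1, hc]
  ring
end

section
/- For the operator H[u] = ∂/∂x₁((τ₁₁u + τ₁₀)∂u/∂x₁) + ∂/∂x₂((τ₂₁u + τ₂₀)∂u/∂x₂) + ∂/∂x₃((τ₃₁u + τ₃₀)∂u/∂x₃) + (ρ₁₀)∂u/∂x₁ + ρ₂₀ ∂u/∂x₂ + ρ₃₀ ∂u/∂x₃, the 7-dimensional space Span{1, x₁, x₁²/2, x₂, x₂²/2, x₃, x₃²/2} is invariant: for any u in this space, H[u] again lies in the space. -/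
/-- The quasilinear diffusion-convection operator
`H[u] = ∑_r ∂/∂x_r((τ_{r1} u + τ_{r0}) ∂u/∂x_r) + ∑_r ρ_{r0} ∂u/∂x_r`. -/
noncomputable def Hop (τ11 τ10 τ21 τ20 τ31 τ30 ρ10 ρ20 ρ30 : ℝ)
    (u : ℝ → ℝ → ℝ → ℝ) (x1 x2 x3 : ℝ) : ℝ :=
  deriv (fun y => (τ11 * u y x2 x3 + τ10) * deriv (fun z => u z x2 x3) y) x1
  + deriv (fun y => (τ21 * u x1 y x3 + τ20) * deriv (fun z => u x1 z x3) y) x2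
  + deriv (fun y => (τ31 * u x1 x2 y + τ30) * deriv (fun z => u x1 x2 z) y) x3
  + ρ10 * deriv (fun y => u y x2 x3) x1
  + ρ20 * deriv (fun y => u x1 y x3) x2
  + ρ30 * deriv (fun y => u x1 x2 y) x3

private lemma quadHasDeriv (A B D y : ℝ) :
    HasDerivAt (fun y : ℝ => A + B * y + D * y ^ 2 / 2) (B + D * y) y := by
  have h := ((hasDerivAt_const y A).add ((hasDerivAt_id y).const_mul B)).add
    (((hasDerivAt_pow 2 y).const_mul D).div_const 2)
  refine h.congr_deriv ?_
  norm_num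
  ring

private lemma innerDeriv (A B D : ℝ) :
    deriv (fun y : ℝ => A + B * y + D * y ^ 2 / 2) = fun y => B + D * y := by
  funext y; exact (quadHasDeriv A B D y).deriv

private lemma innerD1 (A B D c1 c2 c3 c4 : ℝ) :
    deriv (fun z : ℝ => A + B * z + D * z ^ 2 / 2 + c1 + c2 + c3 + c4)
      = fun z => B + D * z := by
  rw [show (fun z : ℝ => A + B * z + D * z ^ 2 / 2 + c1 + c2 + c3 + c4)
      = fun z : ℝ => (A + c1 + c2 + c3 + c4) + B * z + D * z ^ 2 / 2 from by
        funext z; ring, innerDeriv]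

private lemma innerD2 (A B D c1 c2 c3 c4 : ℝ) :
    deriv (fun z : ℝ => A + c1 + c2 + B * z + D * z ^ 2 / 2 + c3 + c4)
      = fun z => B + D * z := by
  rw [show (fun z : ℝ => A + c1 + c2 + B * z + D * z ^ 2 / 2 + c3 + c4)
      = fun z : ℝ => (A + c1 + c2 + c3 + c4) + B * z + D * z ^ 2 / 2 from by
        funext z; ring, innerDeriv]

private lemma innerD3 (A B D c1 c2 c3 c4 : ℝ) :
    deriv (fun z : ℝ => A + c1 + c2 + c3 + c4 + B * z + D * z ^ 2 / 2)
      = fun z => B + D * z := by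
  rw [show (fun z : ℝ => A + c1 + c2 + c3 + c4 + B * z + D * z ^ 2 / 2)
      = fun z : ℝ => (A + c1 + c2 + c3 + c4) + B * z + D * z ^ 2 / 2 from by
        funext z; ring, innerDeriv]

private lemma outerD (τ τ0 A B D x : ℝ) :
    deriv (fun y : ℝ => (τ * (A + B * y + D * y ^ 2 / 2) + τ0) * (B + D * y)) x
      = τ * (B + D * x) ^ 2 + (τ * (A + B * x + D * x ^ 2 / 2) + τ0) * D := by
  have h1 : HasDerivAt (fun y : ℝ => τ * (A + B * y + D * y ^ 2 / 2) + τ0)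
      (τ * (B + D * x)) x := ((quadHasDeriv A B D x).const_mul τ).add_const τ0
  have h2 : HasDerivAt (fun y : ℝ => B + D * y) D x := by
    have h := (hasDerivAt_const x B).add ((hasDerivAt_id x).const_mul D)
    refine h.congr_deriv ?_
    ring
  rw [HasDerivAt.deriv (f := fun y : ℝ => (τ * (A + B * y + D * y ^ 2 / 2) + τ0) * (B + D * y)) (h1.mul h2)]; ring

theorem quadratic_poly_subspace_invariant
    (τ11 τ10 τ21 τ20 τ31 τ30 ρ10 ρ20 ρ30 l0 l1 l2 l3 l4 l5 l6 : ℝ) :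
    ∃ μ0 μ1 μ2 μ3 μ4 μ5 μ6 : ℝ,
      ∀ x1 x2 x3 : ℝ,
        Hop τ11 τ10 τ21 τ20 τ31 τ30 ρ10 ρ20 ρ30
          (fun y1 y2 y3 => l0 + l1 * y1 + l2 * y1 ^ 2 / 2 + l3 * y2 + l4 * y2 ^ 2 / 2
            + l5 * y3 + l6 * y3 ^ 2 / 2) x1 x2 x3
        = μ0 + μ1 * x1 + μ2 * x1 ^ 2 / 2 + μ3 * x2 + μ4 * x2 ^ 2 / 2
          + μ5 * x3 + μ6 * x3 ^ 2 / 2 := by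
  set K := τ11 * l2 + τ21 * l4 + τ31 * l6 with hK
  refine ⟨τ11 * l1 ^ 2 + τ21 * l3 ^ 2 + τ31 * l5 ^ 2 + K * l0 + τ10 * l2 + τ20 * l4
      + τ30 * l6 + ρ10 * l1 + ρ20 * l3 + ρ30 * l5,
    2 * τ11 * l1 * l2 + K * l1 + ρ10 * l2,
    2 * τ11 * l2 ^ 2 + K * l2,
    2 * τ21 * l3 * l4 + K * l3 + ρ20 * l4,
    2 * τ21 * l4 ^ 2 + K * l4,
    2 * τ31 * l5 * l6 + K * l5 + ρ30 * l6,
    2 * τ31 * l6 ^ 2 + K * l6, ?_⟩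
  intro x1 x2 x3
  simp only [Hop, innerD1, innerD2, innerD3]
  rw [show (fun y : ℝ => (τ11 * (l0 + l1 * y + l2 * y ^ 2 / 2 + l3 * x2 + l4 * x2 ^ 2 / 2
        + l5 * x3 + l6 * x3 ^ 2 / 2) + τ10) * (l1 + l2 * y))
      = (fun y : ℝ => (τ11 * ((l0 + l3 * x2 + l4 * x2 ^ 2 / 2 + l5 * x3 + l6 * x3 ^ 2 / 2)
        + l1 * y + l2 * y ^ 2 / 2) + τ10) * (l1 + l2 * y)) from by funext y; ring,
    show (fun y : ℝ => (τ21 * (l0 + l1 * x1 + l2 * x1 ^ 2 / 2 + l3 * y + l4 * y ^ 2 / 2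
        + l5 * x3 + l6 * x3 ^ 2 / 2) + τ20) * (l3 + l4 * y))
      = (fun y : ℝ => (τ21 * ((l0 + l1 * x1 + l2 * x1 ^ 2 / 2 + l5 * x3 + l6 * x3 ^ 2 / 2)
        + l3 * y + l4 * y ^ 2 / 2) + τ20) * (l3 + l4 * y)) from by funext y; ring,
    show (fun y : ℝ => (τ31 * (l0 + l1 * x1 + l2 * x1 ^ 2 / 2 + l3 * x2 + l4 * x2 ^ 2 / 2
        + l5 * y + l6 * y ^ 2 / 2) + τ30) * (l5 + l6 * y))
      = (fun y : ℝ => (τ31 * ((l0 + l1 * x1 + l2 * x1 ^ 2 / 2 + l3 * x2 + l4 * x2 ^ 2 / 2)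
        + l5 * y + l6 * y ^ 2 / 2) + τ30) * (l5 + l6 * y)) from by funext y; ring,
    outerD, outerD, outerD]
  ring
end
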